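/- Let L = u·F ⊕ v·F be a 2-dimensional subspace of V (dim V = 4, n = 2ℓ = 4), and suppose the restriction of h to L is degenerate (i.e., the Gram determinant h(u,u)h(v,v) − h(u,v)h(v,u) = 0 after orthogonalization, equivalently L ∩ L^⊥ ≠ 0). Then the K-line (u∧v)·K ⊆ Λ²V is totally isotropic for g: g((u∧v)a, (u∧v)b) = 0 for all a,b ∈ K. -/

import Mathlib

/-!
A nonzero vector of `L` orthogonal to `L` kills the Gram matrix of `u, w` from the left, so
its determinant `Λ²h(u∧w, u∧w)` vanishes; and `(u∧w)∧(u∧w) = 0`. Thus `g(u∧w, u∧w) = 0`. The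
relations `b(Jx ∧ y) = Λ²h(x, y)` and `J² = δ`, the hermitian symmetry of `Λ²h` and the fact
that `Λ²V` is central in the exterior algebra express every pairing among `u∧w` and `J(u∧w)`
through these two vanishing quantities.
-/

open ExteriorAlgebra

/-- The wedge product of a family of vectors in the exterior algebra. -/
noncomputable def wedgeFam (F : Type*) {V : Type*} [Field F] [AddCommGroup V] [Module F V]
    {k : ℕ} (u : Fin k → V) : ExteriorAlgebra F V :=
  (List.ofFn fun i => ExteriorAlgebra.ι F (u i)).prod

/-- The element `x₀ + j·x₁` of the algebra `K = K₂`. -/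
def Kmk {F : Type*} [Field F] (σ : F → F) (δ x0 x1 : F) : Matrix (Fin 2) (Fin 2) F :=
  !![x0, δ * σ x1; x1, σ x0]

namespace ExteriorAlgebra

variable {R M : Type*} [CommRing R] [AddCommGroup M] [Module R M]

theorem ι_mul_ι_comm (x y : M) : ι R x * ι R y = -(ι R y * ι R x) :=
  eq_neg_of_add_eq_zero_left (ι_add_mul_swap x y)

theorem ι_mul_ι_mem_exteriorPower_two (x y : M) : ι R x * ι R y ∈ ⋀[R]^2 M := by
  rw [exteriorPower, pow_two]
  exact Submodule.mul_mem_mul (LinearMap.mem_range_self _ x) (LinearMap.mem_range_self _ y)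

theorem commute_ι_mul_ι (x y : M) (a : ExteriorAlgebra R M) : Commute (ι R x * ι R y) a := by
  induction a using ExteriorAlgebra.induction with
  | algebraMap r => exact (Algebra.commutes r _).symm
  | ι z =>
    change ι R x * ι R y * ι R z = ι R z * (ι R x * ι R y)
    rw [mul_assoc, ι_mul_ι_comm y z, mul_neg, ← mul_assoc, ι_mul_ι_comm x z, neg_mul, neg_neg,
      mul_assoc]
  | mul a b ha hb => exact ha.mul_right hb
  | add a b ha hb => exact ha.add_right hb

theorem commute_of_mem_exteriorPower_two {x : ExteriorAlgebra R M} (hx : x ∈ ⋀[R]^2 M)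
    (a : ExteriorAlgebra R M) : Commute x a := by
  rw [exteriorPower, pow_two] at hx
  induction hx using Submodule.mul_induction_on' with
  | mem_mul_mem p hp q hq =>
    obtain ⟨y, rfl⟩ := hp
    obtain ⟨z, rfl⟩ := hq
    exact commute_ι_mul_ι y z a
  | add p _ q _ hp hq => exact hp.add_left hq

theorem ι_mul_ι_mul_self_eq_zero (x y : M) : (ι R x * ι R y) * (ι R x * ι R y) = 0 := by
  rw [← mul_assoc, (commute_ι_mul_ι x y (ι R x)).eq, ← mul_assoc, ι_sq_zero, zero_mul, zero_mul]

end ExteriorAlgebra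

theorem wedgeFam_pair {F V : Type*} [Field F] [AddCommGroup V] [Module F V] (x y : V) :
    wedgeFam F ![x, y] = ι F x * ι F y := by
  simp [wedgeFam, List.ofFn_succ]

theorem Kmk_zero_zero {F : Type*} [Field F] {σ : F → F} (hσ : σ 0 = 0) (δ : F) :
    Kmk σ δ 0 0 = 0 := by
  rw [Kmk, hσ, mul_zero]
  ext i j
  fin_cases i <;> fin_cases j <;> rfl

theorem det_gram_eq_zero_of_orthogonal_mem_span {F V : Type*} [Field F] [AddCommGroup V]
    [Module F V] {k : ℕ} (σ : F →+* F) (h : V → V → F)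
    (h_add_left : ∀ u u' w, h (u + u') w = h u w + h u' w)
    (h_smul_left : ∀ (s : F) u w, h (s • u) w = σ s * h u w)
    (e : Fin k → V) {z : V} (hz0 : z ≠ 0) (hz : z ∈ Submodule.span F (Set.range e))
    (hz_orth : ∀ i, h z (e i) = 0) :
    (Matrix.of fun i j => h (e i) (e j)).det = 0 := by
  obtain ⟨c, rfl⟩ := (Submodule.mem_span_range_iff_exists_fun F).mp hz
  refine Matrix.exists_vecMul_eq_zero_iff.mp ⟨σ ∘ c, fun hc => hz0 ?_, funext fun j => ?_⟩
  · have hc0 : c = 0 := funext fun i => σ.injective (by simpa using congr_fun hc i)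
    simp [hc0]
  · let hj : V →+ F := AddMonoidHom.mk' (fun x => h x (e j)) fun x y => h_add_left x y (e j)
    have := hz_orth j
    rw [show h (∑ i, c i • e i) (e j) = hj (∑ i, c i • e i) from rfl, map_sum] at this
    simpa [Matrix.vecMul, dotProduct, hj, h_smul_left] using this

theorem det_gram_swap {R V : Type*} [CommRing R] {k : ℕ} (σ : R ≃+* R) (h : V → V → R)
    (h_herm : ∀ u w, h w u = σ (h u w)) (p q : Fin k → V) :
    (Matrix.of fun i j => h (q i) (p j)).det = σ (Matrix.of fun i j => h (p i) (q j)).det := by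
  rw [RingEquiv.map_det, ← Matrix.det_transpose]
  congr 1
  ext i j
  simp only [Matrix.transpose_apply, RingEquiv.mapMatrix_apply, Matrix.map_apply, Matrix.of_apply]
  exact h_herm _ _

section ExteriorSquare

variable {F V : Type*} [Field F] [AddCommGroup V] [Module F V]

theorem form_swap_of_mem_exteriorPower_two (σ : F ≃+* F) (h : V → V → F)
    (h_herm : ∀ u w, h w u = σ (h u w))
    (H : ExteriorAlgebra F V → ExteriorAlgebra F V → F)
    (H_add_left : ∀ x x' y, H (x + x') y = H x y + H x' y)
    (H_add_right : ∀ x y y', H x (y + y') = H x y + H x y')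
    (H_det : ∀ (k : ℕ) (u w : Fin k → V),
      H (wedgeFam F u) (wedgeFam F w) = Matrix.det (Matrix.of fun i j => h (u i) (w j)))
    {x y : ExteriorAlgebra F V} (hx : x ∈ ⋀[F]^2 V) (hy : y ∈ ⋀[F]^2 V) :
    H y x = σ (H x y) := by
  rw [exteriorPower, pow_two] at hx hy
  induction hx using Submodule.mul_induction_on' generalizing y with
  | mem_mul_mem _ ha _ hc =>
    obtain ⟨a, rfl⟩ := ha
    obtain ⟨c, rfl⟩ := hc
    induction hy using Submodule.mul_induction_on' with
    | mem_mul_mem _ hp _ hq =>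
      obtain ⟨p, rfl⟩ := hp
      obtain ⟨q, rfl⟩ := hq
      rw [← wedgeFam_pair, ← wedgeFam_pair, H_det, H_det, det_gram_swap σ h h_herm]
    | add y₁ _ y₂ _ h₁ h₂ => rw [H_add_left, H_add_right, map_add, h₁, h₂]
  | add x₁ _ x₂ _ h₁ h₂ => rw [H_add_right, H_add_left, map_add, h₁ hy, h₂ hy]

theorem isotropic_span_J_of_isotropic (σ : F ≃+* F)
    (H : ExteriorAlgebra F V → ExteriorAlgebra F V → F)
    (H_add_left : ∀ x x' y, H (x + x') y = H x y + H x' y)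
    (H_add_right : ∀ x y y', H x (y + y') = H x y + H x y')
    (H_smul_left : ∀ (s : F) x y, H (s • x) y = σ s * H x y)
    (H_smul_right : ∀ (s : F) x y, H x (s • y) = s * H x y)
    (H_herm : ∀ x ∈ ⋀[F]^2 V, ∀ y ∈ ⋀[F]^2 V, H y x = σ (H x y))
    (b : ExteriorAlgebra F V →ₗ[F] F)
    (J : ExteriorAlgebra F V → ExteriorAlgebra F V)
    (hJ_mem : ∀ x ∈ ⋀[F]^2 V, J x ∈ ⋀[F]^2 V)
    (hJ_char : ∀ x ∈ ⋀[F]^2 V, ∀ y ∈ ⋀[F]^2 V, b (J x * y) = H x y)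
    (δ : F) (hJsq : ∀ x ∈ ⋀[F]^2 V, J (J x) = δ • x)
    {W : ExteriorAlgebra F V} (hW : W ∈ ⋀[F]^2 V) (hHW : H W W = 0) (hbW : b (W * W) = 0)
    (a0 a1 b0 b1 : F) :
    H (a0 • W + a1 • J W) (b0 • W + b1 • J W) = 0 ∧
      b ((a0 • W + a1 • J W) * (b0 • W + b1 • J W)) = 0 := by
  have hJW := hJ_mem W hW
  have hb_JW_W : b (J W * W) = 0 := by rw [hJ_char W hW W hW, hHW]
  have hb_W_JW : b (W * J W) = 0 := by
    rw [(commute_of_mem_exteriorPower_two hW _).eq, hb_JW_W]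
  have hH_JW_W : H (J W) W = 0 := by
    rw [← hJ_char _ hJW _ hW, hJsq W hW, smul_mul_assoc, map_smul, hbW, smul_zero]
  have hH_W_JW : H W (J W) = 0 := by rw [H_herm _ hJW _ hW, hH_JW_W, map_zero]
  have hb_JW_JW : b (J W * J W) = 0 := by rw [hJ_char _ hW _ hJW, hH_W_JW]
  have hH_JW_JW : H (J W) (J W) = 0 := by
    rw [← hJ_char _ hJW _ hJW, hJsq W hW, smul_mul_assoc, map_smul, hb_W_JW, smul_zero]
  constructor
  · simp only [H_add_left, H_add_right, H_smul_left, H_smul_right, hHW, hH_W_JW, hH_JW_W,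
      hH_JW_JW, mul_zero, add_zero]
  · simp only [add_mul, mul_add, smul_mul_assoc, mul_smul_comm, map_add, map_smul, hbW, hb_W_JW,
      hb_JW_W, hb_JW_JW, smul_zero, add_zero]

end ExteriorSquare

theorem degenerate_line_gives_isotropic_K_line_general
    {F V : Type*} [Field F] [AddCommGroup V] [Module F V]
    (ℓ : ℕ) (hℓ : ℓ = 2)
    (σ : F ≃+* F)
    (h : V → V → F)
    (h_add_left : ∀ u u' w, h (u + u') w = h u w + h u' w)
    (h_smul_left : ∀ (s : F) u w, h (s • u) w = σ s * h u w)
    (h_herm : ∀ u w, h w u = σ (h u w))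
    (H : ExteriorAlgebra F V → ExteriorAlgebra F V → F)
    (H_add_left : ∀ x x' y, H (x + x') y = H x y + H x' y)
    (H_add_right : ∀ x y y', H x (y + y') = H x y + H x y')
    (H_smul_left : ∀ (s : F) x y, H (s • x) y = σ s * H x y)
    (H_smul_right : ∀ (s : F) x y, H x (s • y) = s * H x y)
    (H_det : ∀ (k : ℕ) (u w : Fin k → V),
      H (wedgeFam F u) (wedgeFam F w) = Matrix.det (Matrix.of fun i j => h (u i) (w j)))
    (b : ExteriorAlgebra F V →ₗ[F] F)
    (J : ExteriorAlgebra F V → ExteriorAlgebra F V)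
    (hJ_mem : ∀ x ∈ ⋀[F]^ℓ V, J x ∈ ⋀[F]^ℓ V)
    (hJ_char : ∀ x ∈ ⋀[F]^ℓ V, ∀ y ∈ ⋀[F]^ℓ V, b (J x * y) = H x y)
    (δ : F)
    (hJsq : ∀ x ∈ ⋀[F]^ℓ V, J (J x) = δ • x)
    (u w : V)
    -- the restriction of h to L is degenerate: L ∩ L^⊥ ≠ 0
    (hLdeg : ∃ z : V, z ≠ 0 ∧ z ∈ Submodule.span F {u, w} ∧
        ∀ x ∈ Submodule.span F {u, w}, h z x = 0) :
    ∀ a0 a1 b0 b1 : F,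
      Kmk ⇑σ δ
          (H (a0 • (ι F u * ι F w) + a1 • J (ι F u * ι F w))
             (b0 • (ι F u * ι F w) + b1 • J (ι F u * ι F w)))
          (b ((a0 • (ι F u * ι F w) + a1 • J (ι F u * ι F w))
             * (b0 • (ι F u * ι F w) + b1 • J (ι F u * ι F w))))
        = 0 := by
  subst hℓ
  intro a0 a1 b0 b1
  obtain ⟨z, hz0, hz, hz_orth⟩ := hLdeg
  have hgram : H (ι F u * ι F w) (ι F u * ι F w) = 0 := by
    rw [← wedgeFam_pair, H_det]
    refine det_gram_eq_zero_of_orthogonal_mem_span σ h h_add_left h_smul_left ![u, w] hz0 ?_ ?_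
    · rwa [Matrix.range_cons_cons_empty]
    · exact Fin.forall_fin_two.mpr ⟨hz_orth u (Submodule.subset_span (by simp)),
        hz_orth w (Submodule.subset_span (by simp))⟩
  obtain ⟨hH, hb⟩ := isotropic_span_J_of_isotropic σ H H_add_left H_add_right H_smul_left
    H_smul_right (fun x hx y hy => form_swap_of_mem_exteriorPower_two σ h h_herm H H_add_left
      H_add_right H_det hx hy) b J hJ_mem hJ_char δ hJsq (ι_mul_ι_mem_exteriorPower_two u w)
    hgram (by rw [ι_mul_ι_mul_self_eq_zero, map_zero]) a0 a1 b0 b1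
  rw [hH, hb]
  exact Kmk_zero_zero (map_zero σ) δ

/-- if `L = uF ⊕ vF` is a 2-dimensional subspace of `V` (`dim V = 4`)
on which `h` restricts degenerately (`L ∩ L^⊥ ≠ 0`), then the `K`-line
`(u∧v)·K ⊆ Λ²V` is totally isotropic for `g`: `g((u∧v)a, (u∧v)b) = 0` for all
`a, b ∈ K`.  The right action of `a = a₀ + j a₁ ∈ K` is `w·a = a₀ • w + a₁ • J w`,
and `g(X,Y) = Λ²h(X,Y) + j·Pf(X,Y)`. -/
theorem degenerate_line_gives_isotropic_K_line
    {F V : Type*} [Field F] [AddCommGroup V] [Module F V] [FiniteDimensional F V]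
    (n ℓ : ℕ) (hn : n = 4) (hℓ : ℓ = 2)
    (hfr : Module.finrank F V = n)
    (σ : F ≃+* F) (hσ : ∀ a, σ (σ a) = a)
    (h : V → V → F)
    (h_add_left : ∀ u u' w, h (u + u') w = h u w + h u' w)
    (h_add_right : ∀ u w w', h u (w + w') = h u w + h u w')
    (h_smul_left : ∀ (s : F) u w, h (s • u) w = σ s * h u w)
    (h_smul_right : ∀ (s : F) u w, h u (s • w) = s * h u w)
    (h_herm : ∀ u w, h w u = σ (h u w))
    (h_nondeg : ∀ u, (∀ w, h u w = 0) → u = 0)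
    (v : Module.Basis (Fin n) F V)
    (h_orth : ∀ i j, i ≠ j → h (v i) (v j) = 0)
    (H : ExteriorAlgebra F V → ExteriorAlgebra F V → F)
    (H_add_left : ∀ x x' y, H (x + x') y = H x y + H x' y)
    (H_add_right : ∀ x y y', H x (y + y') = H x y + H x y')
    (H_smul_left : ∀ (s : F) x y, H (s • x) y = σ s * H x y)
    (H_smul_right : ∀ (s : F) x y, H x (s • y) = s * H x y)
    (H_det : ∀ (k : ℕ) (u w : Fin k → V),
      H (wedgeFam F u) (wedgeFam F w) = Matrix.det (Matrix.of fun i j => h (u i) (w j)))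
    (H_cross : ∀ (k m : ℕ), k ≠ m → ∀ x ∈ ⋀[F]^k V, ∀ y ∈ ⋀[F]^m V, H x y = 0)
    (b : ExteriorAlgebra F V →ₗ[F] F)
    (hb_inj : ∀ z ∈ ⋀[F]^n V, b z = 0 → z = 0)
    (hb_off : ∀ (k : ℕ), k ≠ n → ∀ z ∈ ⋀[F]^k V, b z = 0)
    (J : ExteriorAlgebra F V → ExteriorAlgebra F V)
    (hJ_mem : ∀ x ∈ ⋀[F]^ℓ V, J x ∈ ⋀[F]^ℓ V)
    (hJ_char : ∀ x ∈ ⋀[F]^ℓ V, ∀ y ∈ ⋀[F]^ℓ V, b (J x * y) = H x y)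
    (δ : F) (hδR : σ δ = δ) (hδ0 : δ ≠ 0)
    (hJsq : ∀ x ∈ ⋀[F]^ℓ V, J (J x) = δ • x)
    -- L = uF ⊕ vF is 2-dimensional
    (u w : V) (hLindep : LinearIndependent F ![u, w])
    -- the restriction of h to L is degenerate: L ∩ L^⊥ ≠ 0
    (hLdeg : ∃ z : V, z ≠ 0 ∧ z ∈ Submodule.span F {u, w} ∧
        ∀ x ∈ Submodule.span F {u, w}, h z x = 0) :
    ∀ a0 a1 b0 b1 : F,
      Kmk ⇑σ δ
          (H (a0 • (ι F u * ι F w) + a1 • J (ι F u * ι F w))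
             (b0 • (ι F u * ι F w) + b1 • J (ι F u * ι F w)))
          (b ((a0 • (ι F u * ι F w) + a1 • J (ι F u * ι F w))
             * (b0 • (ι F u * ι F w) + b1 • J (ι F u * ι F w))))
        = 0 :=
  degenerate_line_gives_isotropic_K_line_general ℓ hℓ σ h h_add_left h_smul_left h_herm H H_add_left
    H_add_right H_smul_left H_smul_right H_det b J hJ_mem hJ_char δ hJsq u w hLdeg
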